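/- arXiv:0904.1812 — 4 statements merged into one kernel-verified Lean document; each statement's English description precedes it below -/
import Mathlib

section
/- Let T ≥ M ≥ 1, P = T - M + 1, and let x_p ∈ ℂ^M for p = 1,...,P. Define the T×M matrix C whose (t, j) entry equals (x_p)_j if t = j + p - 1 for some p ∈ {1,...,P}, and 0 otherwise (each vector x_p placed along the p-th descending diagonal). If there exists an index p such that every coordinate of x_p is nonzero and x_q = 0 for all q < p, then C has rank M (full column rank). -/
/-!
Let `p` be the first layer that is not zero. The `M` rows `p, p + 1, …, p + M - 1` of `C` form a
lower triangular square block: above its diagonal only earlier layers contribute, and they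
vanish. Its diagonal is `x p`, which has no zero coordinate, so the block is invertible and
`C` has full column rank.
-/

namespace Matrix

theorem IsLowerTriangular.isUnit_of_isUnit_diag {n R : Type*} [Fintype n] [LinearOrder n]
    [CommRing R] {A : Matrix n n R} (hA : A.IsLowerTriangular) (hdiag : ∀ i, IsUnit (A i i)) :
    IsUnit A := by
  rw [isUnit_iff_isUnit_det, det_of_isLowerTriangular A hA]
  exact IsUnit.prod_univ_iff.mpr hdiag

theorem rank_eq_card_width_of_isUnit_submatrix {m n R : Type*} [Fintype n] [DecidableEq n]
    [CommRing R] [StrongRankCondition R] (A : Matrix m n R) (r : n → m)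
    (h : IsUnit (A.submatrix r id)) : A.rank = Fintype.card n :=
  le_antisymm A.rank_le_card_width <|
    (rank_of_isUnit _ h).symm.le.trans (A.rank_submatrix_le r id)

end Matrix

def layerMatrix {K : Type*} [Zero K] {P M : ℕ} (T : ℕ) (x : Fin P → Fin M → K) :
    Matrix (Fin T) (Fin M) K :=
  Matrix.of fun t j =>
    if ht : (j : ℕ) ≤ t ∧ (t : ℕ) - j < P then x ⟨t - j, ht.2⟩ j else 0

section layerMatrix

variable {K : Type*} [Zero K] {P M T : ℕ} (x : Fin P → Fin M → K) (p : Fin P)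
  (hpT : (p : ℕ) + M ≤ T)

def layerBlock : Matrix (Fin M) (Fin M) K :=
  (layerMatrix T x).submatrix (fun j => Fin.castLE hpT (Fin.natAdd p j)) id

theorem layerBlock_apply_self (j : Fin M) : layerBlock x p hpT j j = x p j := by
  simp [layerBlock, layerMatrix]

theorem layerBlock_isLowerTriangular (hprev : ∀ q < p, x q = 0) :
    (layerBlock x p hpT).IsLowerTriangular := by
  intro i j hij
  have hij : (i : ℕ) < j := hij
  simp only [layerBlock, layerMatrix, Matrix.submatrix_apply, Matrix.of_apply, Fin.val_castLE,
    Fin.val_natAdd, id]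
  split_ifs with h
  · rw [hprev _ (Fin.mk_lt_mk.mpr (by omega))]
    rfl
  · rfl

end layerMatrix

theorem stmt_2_general (M T : ℕ) (hMT : M ≤ T) (P : ℕ) (hP : P = T - M + 1)
    (x : Fin P → Fin M → ℂ)
    (C : Matrix (Fin T) (Fin M) ℂ)
    (hC : ∀ (t : Fin T) (j : Fin M),
      C t j = if ht : (j : ℕ) ≤ (t : ℕ) ∧ (t : ℕ) - (j : ℕ) < P
        then x ⟨(t : ℕ) - (j : ℕ), ht.2⟩ j else 0)
    (hx : ∃ p : Fin P, (∀ j : Fin M, x p j ≠ 0) ∧ ∀ q : Fin P, q < p → x q = 0) :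
    C.rank = M := by
  obtain ⟨p, hp, hprev⟩ := hx
  have hpT : (p : ℕ) + M ≤ T := by omega
  have hCx : C = layerMatrix T x := Matrix.ext hC
  subst hCx
  have hblock : IsUnit (layerBlock x p hpT) :=
    (layerBlock_isLowerTriangular x p hpT hprev).isUnit_of_isUnit_diag fun j => by
      rw [layerBlock_apply_self]
      exact (hp j).isUnit
  simpa using Matrix.rank_eq_card_width_of_isUnit_submatrix _ _ hblock

theorem stmt_2 (M T : ℕ) (hM : 1 ≤ M) (hMT : M ≤ T) (P : ℕ) (hP : P = T - M + 1)
    (x : Fin P → Fin M → ℂ)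
    (C : Matrix (Fin T) (Fin M) ℂ)
    (hC : ∀ (t : Fin T) (j : Fin M),
      C t j = if ht : (j : ℕ) ≤ (t : ℕ) ∧ (t : ℕ) - (j : ℕ) < P
        then x ⟨(t : ℕ) - (j : ℕ), ht.2⟩ j else 0)
    (hx : ∃ p : Fin P, (∀ j : Fin M, x p j ≠ 0) ∧ ∀ q : Fin P, q < p → x q = 0) :
    C.rank = M :=
  stmt_2_general M T hMT P hP x C hC hx
end

section
/- Let Θ be an M×M complex matrix all of whose entries are nonzero, and let h ∈ ℂ^M with h ≠ 0. Define the (M+1)×M matrices G₁ = [diag(h)·Θ ; 0_{1×M}] (diag(h)·Θ on top, one zero row below) and G₂ = [0_{1×M} ; diag(h)·Θ] (one zero row on top). Then no column of G₁ lies in the column span of G₂, and no column of G₂ lies in the column span of G₁. -/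
open Submodule

theorem Submodule.notMem_span_of_apply_ne_zero {R ι : Type*} [Semiring R] {s : Set (ι → R)}
    {v : ι → R} (t : ι) (hs : ∀ w ∈ s, w t = 0) (hv : v t ≠ 0) : v ∉ span R s := fun hmem =>
  hv ((span_le (p := LinearMap.ker (LinearMap.proj t))).mpr hs hmem)

theorem Function.exists_ne_zero_forall_lt_eq_zero {ι M : Type*} [LinearOrder ι] [WellFoundedLT ι]
    [Zero M] {f : ι → M} (hf : f ≠ 0) : ∃ k, f k ≠ 0 ∧ ∀ i < k, f i = 0 := by
  obtain ⟨k, hk, hmin⟩ := wellFounded_lt.has_min {i | f i ≠ 0}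
    (Function.ne_iff.mp hf)
  exact ⟨k, hk, fun i hi => by_contra fun hfi => hmin i hfi hi⟩

theorem Function.exists_ne_zero_forall_gt_eq_zero {ι M : Type*} [LinearOrder ι] [WellFoundedGT ι]
    [Zero M] {f : ι → M} (hf : f ≠ 0) : ∃ k, f k ≠ 0 ∧ ∀ i, k < i → f i = 0 :=
  Function.exists_ne_zero_forall_lt_eq_zero (ι := ιᵒᵈ) hf

theorem stmt_3 (M : ℕ) (Θ : Matrix (Fin M) (Fin M) ℂ)
    (hΘ : ∀ i j, Θ i j ≠ 0) (h : Fin M → ℂ) (hh : h ≠ 0)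
    (G1 G2 : Matrix (Fin (M + 1)) (Fin M) ℂ)
    (hG1 : ∀ (t : Fin (M + 1)) (j : Fin M),
      G1 t j = if ht : (t : ℕ) < M then h ⟨t, ht⟩ * Θ ⟨t, ht⟩ j else 0)
    (hG2 : ∀ (t : Fin (M + 1)) (j : Fin M),
      G2 t j = if ht : 0 < (t : ℕ)
        then h ⟨(t : ℕ) - 1, by have := t.isLt; omega⟩ *
             Θ ⟨(t : ℕ) - 1, by have := t.isLt; omega⟩ j else 0) :
    (∀ m : Fin M, (fun t => G1 t m) ∉
      Submodule.span ℂ (Set.range fun j : Fin M => fun t => G2 t j)) ∧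
    (∀ m : Fin M, (fun t => G2 t m) ∉
      Submodule.span ℂ (Set.range fun j : Fin M => fun t => G1 t j)) := by
  refine ⟨fun m => ?_, fun m => ?_⟩
  · -- at the row of the first nonzero entry of `h`, `G2` vanishes but `G1` does not
    obtain ⟨k, hk, hbelow⟩ := Function.exists_ne_zero_forall_lt_eq_zero hh
    refine notMem_span_of_apply_ne_zero k.castSucc ?_ ?_
    · rintro _ ⟨j, rfl⟩
      show G2 k.castSucc j = 0
      rw [hG2]
      split_ifs with hpos
      · rw [hbelow _ (Fin.lt_def.mpr (by simp only [Fin.val_castSucc] at hpos ⊢; omega)), zero_mul]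
      · rfl
    · simpa [hG1] using mul_ne_zero hk (hΘ k m)
  · -- at the row just below the last nonzero entry of `h`, `G1` vanishes but `G2` does not
    obtain ⟨k, hk, habove⟩ := Function.exists_ne_zero_forall_gt_eq_zero hh
    refine notMem_span_of_apply_ne_zero k.succ ?_ ?_
    · rintro _ ⟨j, rfl⟩
      show G1 k.succ j = 0
      rw [hG1]
      split_ifs with hlt
      · rw [habove _ (Fin.lt_def.mpr (by simp)), zero_mul]
      · rfl
    · simpa [hG2] using mul_ne_zero hk (hΘ k m)
end

section
/- Let h ∈ ℂ⁴ be nonzero and Θ a 4×4 matrix with all entries nonzero. Write g_i = h_i · (row i of Θ) ∈ ℂ^{1×4}. Form the 7×12 matrix H = [G₁ G₂ G₃] with G₁ = [g₁; 0; 0; g₄; 0; g₃; g₂], G₂ = [0; g₂; 0; g₁; g₄; 0; g₃], G₃ = [0; 0; g₃; 0; g₂; g₄; g₁] (each row shown is a 1×4 block). Then each of the three column groups G₁, G₂, G₃ is linearly independent of the other two: no column of G_i is a linear combination of the columns of the other two groups. -/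
open Submodule Set

theorem apply_eq_zero_of_mem_span_cols {R m n : Type*} [Semiring R]
    {A B : Matrix m n R} {v : m → R} {t : m}
    (hv : v ∈ span R ((range fun j => fun s => A s j) ∪ range fun j => fun s => B s j))
    (hA : A t = 0) (hB : B t = 0) : v t = 0 := by
  have hS : EqOn (LinearMap.proj (R := R) t) (0 : (m → R) →ₗ[R] R)
      ((range fun j => fun s => A s j) ∪ range fun j => fun s => B s j) := by
    rintro w (⟨j, rfl⟩ | ⟨j, rfl⟩)
    · exact congrFun hA j
    · exact congrFun hB j
  exact LinearMap.eqOn_span hS hv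

theorem stmt_11 (h : Fin 4 → ℂ) (hh : h ≠ 0)
    (Θ : Matrix (Fin 4) (Fin 4) ℂ) (hΘ : ∀ i j, Θ i j ≠ 0)
    (g : Fin 4 → Fin 4 → ℂ) (hg : ∀ i j, g i j = h i * Θ i j)
    (G1 G2 G3 : Matrix (Fin 7) (Fin 4) ℂ)
    (hG1 : G1 = Matrix.of ![g 0, 0, 0, g 3, 0, g 2, g 1])
    (hG2 : G2 = Matrix.of ![0, g 1, 0, g 0, g 3, 0, g 2])
    (hG3 : G3 = Matrix.of ![0, 0, g 2, 0, g 1, g 3, g 0]) :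
    (∀ m : Fin 4, (fun t => G1 t m) ∉ Submodule.span ℂ
      ((Set.range fun j : Fin 4 => fun t => G2 t j) ∪
       (Set.range fun j : Fin 4 => fun t => G3 t j))) ∧
    (∀ m : Fin 4, (fun t => G2 t m) ∉ Submodule.span ℂ
      ((Set.range fun j : Fin 4 => fun t => G1 t j) ∪
       (Set.range fun j : Fin 4 => fun t => G3 t j))) ∧
    (∀ m : Fin 4, (fun t => G3 t m) ∉ Submodule.span ℂ
      ((Set.range fun j : Fin 4 => fun t => G1 t j) ∪
       (Set.range fun j : Fin 4 => fun t => G2 t j))) := by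
  subst hG1 hG2 hG3
  have g_eq_zero : ∀ i, h i = 0 → g i = 0 := fun i hi => funext fun j => by simp [hg, hi]
  have h_eq_zero : ∀ i m, g i m = 0 → h i = 0 := fun i m him =>
    (mul_eq_zero.mp (hg i m ▸ him)).resolve_right (hΘ i m)
  have not_all_zero : ¬ (h 0 = 0 ∧ h 1 = 0 ∧ h 2 = 0 ∧ h 3 = 0) :=
    fun ⟨h0, h1, h2, h3⟩ => hh (funext fun i => by fin_cases i <;> assumption)
  -- In each group, read off rows in an order where the other two groups only see `g i` already
  -- known to vanish.
  refine ⟨fun m hm => ?_, fun m hm => ?_, fun m hm => ?_⟩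
  · have h0 := h_eq_zero 0 m (apply_eq_zero_of_mem_span_cols (t := 0) hm rfl rfl)
    have h3 := h_eq_zero 3 m (apply_eq_zero_of_mem_span_cols (t := 3) hm (g_eq_zero 0 h0) rfl)
    have h2 := h_eq_zero 2 m (apply_eq_zero_of_mem_span_cols (t := 5) hm rfl (g_eq_zero 3 h3))
    have h1 := h_eq_zero 1 m
      (apply_eq_zero_of_mem_span_cols (t := 6) hm (g_eq_zero 2 h2) (g_eq_zero 0 h0))
    exact not_all_zero ⟨h0, h1, h2, h3⟩
  · have h1 := h_eq_zero 1 m (apply_eq_zero_of_mem_span_cols (t := 1) hm rfl rfl)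
    have h3 := h_eq_zero 3 m (apply_eq_zero_of_mem_span_cols (t := 4) hm rfl (g_eq_zero 1 h1))
    have h0 := h_eq_zero 0 m (apply_eq_zero_of_mem_span_cols (t := 3) hm (g_eq_zero 3 h3) rfl)
    have h2 := h_eq_zero 2 m
      (apply_eq_zero_of_mem_span_cols (t := 6) hm (g_eq_zero 1 h1) (g_eq_zero 0 h0))
    exact not_all_zero ⟨h0, h1, h2, h3⟩
  · have h2 := h_eq_zero 2 m (apply_eq_zero_of_mem_span_cols (t := 2) hm rfl rfl)
    have h3 := h_eq_zero 3 m (apply_eq_zero_of_mem_span_cols (t := 5) hm (g_eq_zero 2 h2) rfl)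
    have h1 := h_eq_zero 1 m (apply_eq_zero_of_mem_span_cols (t := 4) hm rfl (g_eq_zero 3 h3))
    have h0 := h_eq_zero 0 m
      (apply_eq_zero_of_mem_span_cols (t := 6) hm (g_eq_zero 1 h1) (g_eq_zero 2 h2))
    exact not_all_zero ⟨h0, h1, h2, h3⟩
end

section
/- Let M = 3p, h ∈ ℂ^M nonzero, Θ an M×M matrix with all entries nonzero, and g_i = h_i·(row i of Θ). Consider the three column groups G₁, G₂, G₃ of the equivalent channel matrix H of the code C_{3p} (as in equation (27) of the paper). Then reordering h as (h₁, h₄, ..., h_{3p-2}, h_{3p}, h_{3p-3}, ..., h₃, h₂, h₅, ..., h_{3p-1}) and taking the first index j in this sequence with h_j ≠ 0, the row of H containing g_j in group G₁ has all entries in groups G₂ and G₃ equal to zero; consequently G₁ is not contained in the span of the columns of G₂ and G₃. -/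
/-!
Along the reordering, each coefficient `h_j` comes with a row of `H` whose `G₁`-entry is `g_j`
and whose `G₂`- and `G₃`-entries are zero or `g_i` for coefficients `h_i` earlier in the order.
At the first nonzero `h_j` that row is therefore `(g_j, 0, 0)`. Its coordinate functional kills
every column of `G₂` and `G₃` but no column of `G₁`, since `g_j` has no zero entry.
-/

/-- Row `r` of the first column group `G₁` of the equivalent channel matrix of
the code `C_{3p}` (rows indexed by naturals, `0`-based). -/
noncomputable def G1row (p : ℕ) (g : ℕ → Fin (3 * p) → ℂ) (r : ℕ) : Fin (3 * p) → ℂ :=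
  if r < 3 * p then
    (if r % 3 = 0 then g r
     else if r % 3 = 1 then 0
     else if r / 3 = 0 then 0 else g (3 * (r / 3) - 1))
  else if r = 3 * p then g 1
  else if r = 3 * p + 1 then 0
  else if r = 3 * p + 2 then g (3 * p - 1)
  else g (3 * (r - (3 * p + 3)) + 4)

/-- Row `r` of the second column group `G₂`. -/
noncomputable def G2row (p : ℕ) (g : ℕ → Fin (3 * p) → ℂ) (r : ℕ) : Fin (3 * p) → ℂ :=
  if r < 3 * p then
    (if r % 3 = 0 then (if r / 3 = 0 then 0 else g (3 * (r / 3) - 3))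
     else if r % 3 = 1 then g r
     else 0)
  else if r = 3 * p then g (3 * p - 3)
  else if r = 3 * p + 1 then g 2
  else if r = 3 * p + 2 then 0
  else g (3 * (r - (3 * p + 3)) + 5)

/-- Row `r` of the third column group `G₃`. -/
noncomputable def G3row (p : ℕ) (g : ℕ → Fin (3 * p) → ℂ) (r : ℕ) : Fin (3 * p) → ℂ :=
  if r < 3 * p then
    (if r % 3 = 0 then 0
     else if r % 3 = 1 then (if r / 3 = 0 then 0 else g (3 * (r / 3) - 2))
     else g r)
  else if r = 3 * p then 0
  else if r = 3 * p + 1 then g (3 * p - 2)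
  else if r = 3 * p + 2 then g 0
  else g (3 * (r - (3 * p + 3)) + 3)

/-- The reordering `(h₁,h₄,…,h_{3p-2}, h_{3p},h_{3p-3},…,h₃, h₂,h₅,…,h_{3p-1})`
of the channel coefficients (`0`-based indices). -/
def reorder (p k : ℕ) : ℕ :=
  if k < p then 3 * k
  else if k < 2 * p then 3 * p - 1 - 3 * (k - p)
  else 3 * (k - 2 * p) + 1

theorem notMem_span_of_map_ne_zero {R M N : Type*} [Semiring R] [AddCommMonoid M] [Module R M]
    [AddCommMonoid N] [Module R N] (f : M →ₗ[R] N) {s : Set M} {x : M} (hx : f x ≠ 0)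
    (hs : ∀ y ∈ s, f y = 0) : x ∉ Submodule.span R s :=
  fun hmem => hx <| (Submodule.span_le (p := LinearMap.ker f)).mpr hs hmem

section Reorder

variable {p k : ℕ}

theorem reorder_of_lt (hk : k < p) : reorder p k = 3 * k := by
  simp [reorder, hk]

theorem reorder_of_le_of_lt (hpk : p ≤ k) (hk : k < 2 * p) :
    reorder p k = 3 * p - 1 - 3 * (k - p) := by
  simp [reorder, hk, Nat.not_lt.mpr hpk]

theorem reorder_of_two_mul_le (hk : 2 * p ≤ k) : reorder p k = 3 * (k - 2 * p) + 1 := by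
  simp only [reorder]
  split_ifs <;> omega

end Reorder

section Rows

variable {p : ℕ} (g : ℕ → Fin (3 * p) → ℂ)

def IsIsolatedRow (v : Fin (3 * p) → ℂ) (r : ℕ) : Prop :=
  r < 4 * p + 2 ∧ G1row p g r = v ∧ G2row p g r = 0 ∧ G3row p g r = 0

theorem rows_zero (hp : 0 < p) :
    G1row p g 0 = g 0 ∧ G2row p g 0 = 0 ∧ G3row p g 0 = 0 := by
  simp only [G1row, G2row, G3row]
  refine ⟨?_, ?_, ?_⟩ <;> split_ifs <;> first | rfl | omega

theorem rows_three_mul {i : ℕ} (hi : 0 < i) (hip : i < p) :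
    G1row p g (3 * i) = g (3 * i) ∧ G2row p g (3 * i) = g (3 * (i - 1)) ∧
      G3row p g (3 * i) = 0 := by
  simp only [G1row, G2row, G3row]
  refine ⟨?_, ?_, ?_⟩ <;> split_ifs <;> first | rfl | (congr 1; omega)

theorem rows_three_mul_add_two {i : ℕ} (hi : 0 < i) (hip : i < p) :
    G1row p g (3 * i + 2) = g (3 * i - 1) ∧ G2row p g (3 * i + 2) = 0 ∧
      G3row p g (3 * i + 2) = g (3 * i + 2) := by
  simp only [G1row, G2row, G3row]
  refine ⟨?_, ?_, ?_⟩ <;> split_ifs <;> first | rfl | (congr 1; omega)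

theorem rows_three_mul_p :
    G1row p g (3 * p) = g 1 ∧ G2row p g (3 * p) = g (3 * p - 3) ∧ G3row p g (3 * p) = 0 := by
  simp only [G1row, G2row, G3row]
  refine ⟨?_, ?_, ?_⟩ <;> split_ifs <;> first | rfl | (congr 1; omega)

theorem rows_three_mul_p_add_two :
    G1row p g (3 * p + 2) = g (3 * p - 1) ∧ G2row p g (3 * p + 2) = 0 ∧
      G3row p g (3 * p + 2) = g 0 := by
  simp only [G1row, G2row, G3row]
  refine ⟨?_, ?_, ?_⟩ <;> split_ifs <;> first | rfl | (congr 1; omega)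

theorem rows_three_mul_p_add_three (i : ℕ) :
    G1row p g (3 * p + 3 + i) = g (3 * i + 4) ∧ G2row p g (3 * p + 3 + i) = g (3 * i + 5) ∧
      G3row p g (3 * p + 3 + i) = g (3 * i + 3) := by
  simp only [G1row, G2row, G3row]
  refine ⟨?_, ?_, ?_⟩ <;> split_ifs <;> first | rfl | (congr 1; omega)

variable {g} {k₀ : ℕ}

theorem exists_isIsolatedRow_of_lt (hprev : ∀ k < k₀, g (reorder p k) = 0) (hk₀ : k₀ < p) :
    ∃ r, IsIsolatedRow g (g (reorder p k₀)) r := by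
  rw [reorder_of_lt hk₀]
  rcases Nat.eq_zero_or_pos k₀ with rfl | hpos
  · obtain ⟨h₁, h₂, h₃⟩ := rows_zero g hk₀
    exact ⟨0, by omega, h₁, h₂, h₃⟩
  · obtain ⟨h₁, h₂, h₃⟩ := rows_three_mul g hpos hk₀
    refine ⟨3 * k₀, by omega, h₁, ?_, h₃⟩
    rw [h₂, ← reorder_of_lt (by omega : k₀ - 1 < p)]
    exact hprev _ (by omega)

theorem exists_isIsolatedRow_of_le_of_lt (hprev : ∀ k < k₀, g (reorder p k) = 0)
    (hpk : p ≤ k₀) (hk₀ : k₀ < 2 * p) :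
    ∃ r, IsIsolatedRow g (g (reorder p k₀)) r := by
  rw [reorder_of_le_of_lt hpk hk₀]
  rcases hpk.eq_or_lt with rfl | hlt
  · obtain ⟨h₁, h₂, h₃⟩ := rows_three_mul_p_add_two g
    refine ⟨3 * p + 2, by omega, by rw [h₁]; congr 1; omega, h₂, ?_⟩
    rw [h₃]
    simpa [reorder_of_lt (by omega : 0 < p)] using hprev 0 (by omega)
  · set i := p - (k₀ - p) with hi
    obtain ⟨h₁, h₂, h₃⟩ := rows_three_mul_add_two g (i := i) (by omega) (by omega)
    refine ⟨3 * i + 2, by omega, by rw [h₁]; congr 1; omega, h₂, ?_⟩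
    rw [h₃, show 3 * i + 2 = reorder p (k₀ - 1) by rw [reorder_of_le_of_lt] <;> omega]
    exact hprev _ (by omega)

theorem exists_isIsolatedRow_of_two_mul_le (hprev : ∀ k < k₀, g (reorder p k) = 0)
    (hk₀ : 2 * p ≤ k₀) (hj : reorder p k₀ < 3 * p) :
    ∃ r, IsIsolatedRow g (g (reorder p k₀)) r := by
  rw [reorder_of_two_mul_le hk₀] at hj ⊢
  rcases hk₀.eq_or_lt with rfl | hlt
  · obtain ⟨h₁, h₂, h₃⟩ := rows_three_mul_p g
    refine ⟨3 * p, by omega, by rw [h₁]; congr 1; omega, ?_, h₃⟩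
    rw [h₂, show 3 * p - 3 = reorder p (p - 1) by rw [reorder_of_lt] <;> omega]
    exact hprev _ (by omega)
  · obtain ⟨i, rfl⟩ : ∃ i, k₀ = 2 * p + 1 + i := ⟨k₀ - (2 * p + 1), by omega⟩
    obtain ⟨h₁, h₂, h₃⟩ := rows_three_mul_p_add_three g i
    refine ⟨3 * p + 3 + i, by omega, by rw [h₁]; congr 1; omega, ?_, ?_⟩
    · rw [h₂, show 3 * i + 5 = reorder p (2 * p - 2 - i) by
        rw [reorder_of_le_of_lt] <;> omega]
      exact hprev _ (by omega)
    · rw [h₃, show 3 * i + 3 = reorder p (i + 1) by rw [reorder_of_lt] <;> omega]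
      exact hprev _ (by omega)

theorem exists_isIsolatedRow (hprev : ∀ k < k₀, g (reorder p k) = 0)
    (hj : reorder p k₀ < 3 * p) :
    ∃ r, IsIsolatedRow g (g (reorder p k₀)) r := by
  rcases Nat.lt_or_ge k₀ p with hk₀ | hpk
  · exact exists_isIsolatedRow_of_lt hprev hk₀
  rcases Nat.lt_or_ge k₀ (2 * p) with hk₀ | hk₀
  · exact exists_isIsolatedRow_of_le_of_lt hprev hpk hk₀
  · exact exists_isIsolatedRow_of_two_mul_le hprev hk₀ hj

end Rows

theorem stmt_12_general (p : ℕ) (h : Fin (3 * p) → ℂ)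
    (Θ : Matrix (Fin (3 * p)) (Fin (3 * p)) ℂ) (hΘ : ∀ i j, Θ i j ≠ 0)
    (g : ℕ → Fin (3 * p) → ℂ)
    (hg : ∀ n : ℕ, g n = if hn : n < 3 * p
      then (fun j => h ⟨n, hn⟩ * Θ ⟨n, hn⟩ j) else 0)
    (k0 : ℕ)
    (j : ℕ) (hj : j = reorder p k0) (hjlt : j < 3 * p)
    (hjne : h ⟨j, hjlt⟩ ≠ 0)
    (hprev : ∀ k, k < k0 → ∀ hlt : reorder p k < 3 * p, h ⟨reorder p k, hlt⟩ = 0) :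
    (∃ r : ℕ, r < 4 * p + 2 ∧ G1row p g r = g j ∧ G2row p g r = 0 ∧ G3row p g r = 0) ∧
    (∀ m : Fin (3 * p), (fun t : Fin (4 * p + 2) => G1row p g t m) ∉
      Submodule.span ℂ
        ((Set.range fun c : Fin (3 * p) => fun t : Fin (4 * p + 2) => G2row p g t c) ∪
         (Set.range fun c : Fin (3 * p) => fun t : Fin (4 * p + 2) => G3row p g t c))) := by
  subst hj
  have hg_prev : ∀ k < k0, g (reorder p k) = 0 := fun k hk => by
    rw [hg]
    split_ifs with hlt
    · simp only [hprev k hk hlt, zero_mul]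
      rfl
    · rfl
  obtain ⟨r, hr, h₁, h₂, h₃⟩ := exists_isIsolatedRow hg_prev hjlt
  refine ⟨⟨r, hr, h₁, h₂, h₃⟩, fun m => ?_⟩
  refine notMem_span_of_map_ne_zero (LinearMap.proj ⟨r, hr⟩) ?_ ?_
  · simpa [h₁, hg (reorder p k0), hjlt] using mul_ne_zero hjne (hΘ _ m)
  · rintro s (⟨c, rfl⟩ | ⟨c, rfl⟩) <;> simp [h₂, h₃]

theorem stmt_12 (p : ℕ) (hp : 1 ≤ p) (h : Fin (3 * p) → ℂ) (hh : h ≠ 0)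
    (Θ : Matrix (Fin (3 * p)) (Fin (3 * p)) ℂ) (hΘ : ∀ i j, Θ i j ≠ 0)
    (g : ℕ → Fin (3 * p) → ℂ)
    (hg : ∀ n : ℕ, g n = if hn : n < 3 * p
      then (fun j => h ⟨n, hn⟩ * Θ ⟨n, hn⟩ j) else 0)
    (k0 : ℕ) (hk0 : k0 < 3 * p)
    (j : ℕ) (hj : j = reorder p k0) (hjlt : j < 3 * p)
    (hjne : h ⟨j, hjlt⟩ ≠ 0)
    (hprev : ∀ k, k < k0 → ∀ hlt : reorder p k < 3 * p, h ⟨reorder p k, hlt⟩ = 0) :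
    (∃ r : ℕ, r < 4 * p + 2 ∧ G1row p g r = g j ∧ G2row p g r = 0 ∧ G3row p g r = 0) ∧
    (∀ m : Fin (3 * p), (fun t : Fin (4 * p + 2) => G1row p g t m) ∉
      Submodule.span ℂ
        ((Set.range fun c : Fin (3 * p) => fun t : Fin (4 * p + 2) => G2row p g t c) ∪
         (Set.range fun c : Fin (3 * p) => fun t : Fin (4 * p + 2) => G3row p g t c))) :=
  stmt_12_general p h Θ hΘ g hg k0 j hj hjlt hjne hprev
end
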